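/- arXiv:1906.01523 — 3 statements merged into one kernel-verified Lean document; each statement's English description precedes it below -/
import Mathlib

section
/- Let X be a compact metric space, f : X → X continuous, and Z ⊆ X a nonempty closed subset with f(Z) ⊆ Z. Suppose that for every compact set C ⊆ X \ Z, the supremum over x ∈ C of dist(f^[n](x), Z) tends to 0 as n → ∞ (i.e. the distance of f^[n](x) to Z tends to 0 uniformly on every compact subset of X \ Z). Then h_top(f) = h_top(f|Z). -/
/-!
Fix an open symmetric entourage `V` and a time `n`, and let `G` be the union of the `(V, n)`-balls
of a minimal `(V, n)`-cover `s` of `Z`. Since `G` is an open neighbourhood of the compact set `Z`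
and the attraction is uniform on the compact set `Gᶜ`, there is `M` such that an orbit which is
outside `G` at some time is inside `G` from `M` steps later on. Cut an orbit of length `n * k` into
`k` blocks of length `n`: the blocks that start outside `G` lie in a single window of `M`
consecutive blocks. Covering each block outside the window by one of the `#s` balls of `s`, the
window by a fixed finite family, and choosing the position of the window, `X` is covered by
`(k + 1) * C * #s ^ k` sets that are `(V ○ V, n * k)`-small. Hence the `V ○ V`-entropy of `X` is at
most `log #s / n` for every `n`, and the lower limit of these bounds is at most the entropy of `Z`.
-/

open Dynamics Set Filter ENNReal EReal ExpGrowth Metric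
open scoped SetRel

lemma ExpGrowth.expGrowthSup_natCast_add_one :
    expGrowthSup (fun k : ℕ => (k + 1 : ℝ≥0∞)) = 0 := by
  have hreal : Tendsto (fun k : ℕ => Real.log (k + 1) / k) atTop (nhds 0) := by
    have := (Real.tendsto_pow_log_div_mul_add_atTop 1 (-1) 1 one_ne_zero).comp
      (tendsto_natCast_atTop_atTop.atTop_add (tendsto_const_nhds (x := (1 : ℝ))))
    simpa [Function.comp_def] using this
  have hcoe := EReal.tendsto_coe.2 hreal
  rw [EReal.coe_zero] at hcoe
  refine (hcoe.congr fun k => ?_).limsup_eq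
  have hk : ((k : ℝ≥0∞) + 1) = ENNReal.ofReal (k + 1) := by
    rw [ENNReal.ofReal_add (by positivity) zero_le_one]; simp
  dsimp only
  rw [hk, ENNReal.log_ofReal_of_pos (by positivity), EReal.coe_div, EReal.coe_coe_eq_natCast]

namespace Dynamics

section SmallCover

variable {X : Type*} {T : X → X} {F G : Set X} {U : SetRel X X} {m n : ℕ}
  {𝒜 ℬ : Finset (Set X)}

/-- Unlike dynamical covers (see `IsDynCoverOf.iterate_le_pow`), covers by `(U, n)`-small sets can
be concatenated in time without enlarging the entourage. -/
def IsDynSmallCoverOf (T : X → X) (F : Set X) (U : SetRel X X) (n : ℕ)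
    (𝒜 : Finset (Set X)) : Prop :=
  F ⊆ ⋃₀ ↑𝒜 ∧ ∀ P ∈ 𝒜, P ×ˢ P ⊆ dynEntourage T U n

lemma IsDynSmallCoverOf.mono (hFG : F ⊆ G) (hmn : m ≤ n) (h : IsDynSmallCoverOf T G U n 𝒜) :
    IsDynSmallCoverOf T F U m 𝒜 :=
  ⟨hFG.trans h.1, fun P hP => (h.2 P hP).trans (dynEntourage_antitone T U hmn)⟩

lemma IsDynSmallCoverOf.card_pos (h : IsDynSmallCoverOf T F U n 𝒜) (hF : F.Nonempty) :
    0 < 𝒜.card := by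
  obtain ⟨x, hx⟩ := hF
  obtain ⟨P, hP, -⟩ := h.1 hx
  exact Finset.card_pos.2 ⟨P, hP⟩

lemma IsDynSmallCoverOf.coverMincard_le_card (h : IsDynSmallCoverOf T F U n 𝒜) :
    coverMincard T F U n ≤ 𝒜.card := by
  classical
  rcases F.eq_empty_or_nonempty with rfl | ⟨x₀, -⟩
  · simp [coverMincard_empty]
  have : Nonempty X := ⟨x₀⟩
  have hcenter : ∀ P ∈ 𝒜, ∃ y, ∀ x ∈ P, (x, y) ∈ dynEntourage T U n := by
    intro P hP
    rcases P.eq_empty_or_nonempty with rfl | ⟨y, hy⟩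
    · exact ⟨x₀, by simp⟩
    · exact ⟨y, fun x hx => h.2 P hP ⟨hx, hy⟩⟩
  choose! center hcenter using hcenter
  have hcover : IsDynCoverOf T F U n (𝒜.image center : Finset X) := by
    intro x hx
    obtain ⟨P, hP, hxP⟩ := h.1 hx
    exact ⟨center P, Finset.mem_image_of_mem _ hP, hcenter P hP x hxP⟩
  exact hcover.coverMincard_le_card.trans (by exact_mod_cast Finset.card_image_le)

lemma IsDynCoverOf.exists_isDynSmallCoverOf [U.IsSymm] {s : Finset X}
    (h : IsDynCoverOf T F U n s) :
    ∃ 𝒜 : Finset (Set X), IsDynSmallCoverOf T F (U ○ U) n 𝒜 ∧ 𝒜.card ≤ s.card := by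
  classical
  refine ⟨s.image fun y => UniformSpace.ball y (dynEntourage T U n), ⟨fun x hx => ?_, ?_⟩,
    Finset.card_image_le⟩
  · obtain ⟨y, hy, hxy⟩ := h hx
    exact ⟨_, Finset.mem_image_of_mem _ hy, (dynEntourage T U n).symm hxy⟩
  · simp only [Finset.mem_image]
    rintro _ ⟨y, -, rfl⟩ ⟨x, x'⟩ ⟨hx, hx'⟩
    exact dynEntourage_comp_subset T U U n ⟨y, (dynEntourage T U n).symm hx, hx'⟩

lemma IsDynSmallCoverOf.inter_preimage (hP : IsDynSmallCoverOf T F U m 𝒜)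
    (hQ : IsDynSmallCoverOf T G U n ℬ) :
    ∃ 𝒞 : Finset (Set X), IsDynSmallCoverOf T (F ∩ T^[m] ⁻¹' G) U (m + n) 𝒞 ∧
      𝒞.card ≤ 𝒜.card * ℬ.card := by
  classical
  refine ⟨Finset.image₂ (fun P Q => P ∩ T^[m] ⁻¹' Q) 𝒜 ℬ, ⟨?_, ?_⟩,
    Finset.card_image₂_le _ _ _⟩
  · rintro x ⟨hxF, hxG⟩
    obtain ⟨P, hP𝒜, hxP⟩ := hP.1 hxF
    obtain ⟨Q, hQℬ, hxQ⟩ := hQ.1 hxG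
    exact ⟨_, Finset.mem_image₂_of_mem hP𝒜 hQℬ, hxP, hxQ⟩
  · simp only [Finset.mem_image₂]
    rintro _ ⟨P, hP𝒜, Q, hQℬ, rfl⟩ ⟨x, y⟩ ⟨⟨hxP, hxQ⟩, hyP, hyQ⟩
    rw [mem_dynEntourage]
    intro k hk
    rcases lt_or_ge k m with hkm | hkm
    · exact mem_dynEntourage.1 (hP.2 P hP𝒜 ⟨hxP, hyP⟩) k hkm
    · obtain ⟨j, rfl⟩ := Nat.exists_eq_add_of_le hkm
      have := mem_dynEntourage.1 (hQ.2 Q hQℬ ⟨hxQ, hyQ⟩) j (by omega)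
      simpa only [add_comm m j, Function.iterate_add_apply] using this

lemma exists_isDynSmallCoverOf_biUnion {ι : Type*} (I : Finset ι) (F : ι → Set X) {b : ℕ}
    (h : ∀ i ∈ I, ∃ 𝒜 : Finset (Set X), IsDynSmallCoverOf T (F i) U n 𝒜 ∧ 𝒜.card ≤ b) :
    ∃ 𝒜 : Finset (Set X), IsDynSmallCoverOf T (⋃ i ∈ I, F i) U n 𝒜 ∧ 𝒜.card ≤ I.card * b := by
  classical
  choose! 𝒜 h𝒜 h𝒜card using h
  refine ⟨I.biUnion 𝒜, ⟨?_, ?_⟩, Finset.card_biUnion_le.trans (I.sum_le_card_nsmul _ b h𝒜card)⟩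
  · simp only [iUnion_subset_iff]
    intro i hi x hx
    obtain ⟨P, hP, hxP⟩ := (h𝒜 i hi).1 hx
    exact ⟨P, Finset.mem_biUnion.2 ⟨i, hi, hP⟩, hxP⟩
  · simp only [Finset.mem_biUnion]
    rintro P ⟨i, hi, hP⟩
    exact (h𝒜 i hi).2 P hP

lemma IsDynSmallCoverOf.iterate_le_pow (h : IsDynSmallCoverOf T G U n 𝒜) (j : ℕ) :
    ∃ 𝒞 : Finset (Set X), IsDynSmallCoverOf T {x | ∀ i < j, T^[n * i] x ∈ G} U (n * j) 𝒞 ∧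
      𝒞.card ≤ 𝒜.card ^ j := by
  induction j with
  | zero => exact ⟨{univ}, ⟨by simp, by simp⟩, by simp⟩
  | succ j ih =>
    obtain ⟨𝒞, h𝒞, h𝒞card⟩ := ih
    obtain ⟨𝒟, h𝒟, h𝒟card⟩ := h.inter_preimage h𝒞
    have hsub : {x | ∀ i < j + 1, T^[n * i] x ∈ G} ⊆
        G ∩ T^[n] ⁻¹' {x | ∀ i < j, T^[n * i] x ∈ G} := fun x hx =>
      ⟨by simpa using hx 0 (by omega), fun i hi => by
        simpa only [← Function.iterate_add_apply, mul_add_one] using hx (i + 1) (by omega)⟩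
    refine ⟨𝒟, h𝒟.mono hsub (by rw [mul_add_one, add_comm]), ?_⟩
    rw [pow_succ']
    exact h𝒟card.trans (Nat.mul_le_mul_left _ h𝒞card)

lemma exists_le_forall_iterate_mul_mem {M : ℕ} (hn : n ≠ 0)
    (hret : ∀ x ∉ G, ∀ j ≥ M, T^[j] x ∈ G) (k : ℕ) (x : X) :
    ∃ p ≤ k, ∀ i < k, (i < p ∨ p + M ≤ i) → T^[n * i] x ∈ G := by
  classical
  by_cases h : ∃ i < k, T^[n * i] x ∉ G
  · refine ⟨Nat.find h, (Nat.find_spec h).1.le, fun i hik hi => ?_⟩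
    rcases hi with hi | hi
    · by_contra hx
      exact Nat.find_min h hi ⟨hik, hx⟩
    · obtain ⟨j, rfl⟩ := Nat.exists_eq_add_of_le hi
      have hM : M ≤ n * (M + j) :=
        (Nat.le_add_right M j).trans (Nat.le_mul_of_pos_left _ (Nat.pos_of_ne_zero hn))
      have := hret _ (Nat.find_spec h).2 _ hM
      rw [← Function.iterate_add_apply] at this
      convert this using 2
      ring
  · push Not at h
    exact ⟨k, le_rfl, fun i hik _ => h i hik⟩

lemma IsDynSmallCoverOf.exists_visits_outside_window {𝒲 : Finset (Set X)}
    (hG : IsDynSmallCoverOf T G U n 𝒜) (h𝒜 : 0 < 𝒜.card) (huniv : IsDynSmallCoverOf T univ U n 𝒲) (M : ℕ) {k p : ℕ} (hpk : p ≤ k) :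
    ∃ 𝒞 : Finset (Set X),
      IsDynSmallCoverOf T {x | ∀ i < k, (i < p ∨ p + M ≤ i) → T^[n * i] x ∈ G} U (n * k) 𝒞 ∧
      𝒞.card ≤ 𝒲.card ^ M * 𝒜.card ^ k := by
  obtain ⟨𝒞₁, h₁, hcard₁⟩ := hG.iterate_le_pow p
  obtain ⟨𝒞₂, h₂, hcard₂⟩ := huniv.iterate_le_pow M
  obtain ⟨𝒞₃, h₃, hcard₃⟩ := hG.iterate_le_pow (k - (p + M))
  obtain ⟨𝒞₄, h₄, hcard₄⟩ := h₂.inter_preimage h₃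
  obtain ⟨𝒞, h, hcard⟩ := h₁.inter_preimage h₄
  have hsub : {x | ∀ i < k, (i < p ∨ p + M ≤ i) → T^[n * i] x ∈ G} ⊆
      {x | ∀ i < p, T^[n * i] x ∈ G} ∩ T^[n * p] ⁻¹' ({x | ∀ i < M, T^[n * i] x ∈ univ} ∩
        T^[n * M] ⁻¹' {x | ∀ i < k - (p + M), T^[n * i] x ∈ G}) := by
    refine fun x hx => ⟨fun i hi => hx i (by omega) (.inl hi), fun i _ => trivial, fun i hi => ?_⟩
    simp only [← Function.iterate_add_apply]
    convert hx (p + M + i) (by omega) (.inr (by omega)) using 2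
    ring
  refine ⟨𝒞, h.mono hsub ?_, ?_⟩
  · rw [← mul_add, ← mul_add]
    exact Nat.mul_le_mul_left _ (by omega)
  · calc 𝒞.card ≤ 𝒜.card ^ p * (𝒲.card ^ M * 𝒜.card ^ (k - (p + M))) := by
          refine hcard.trans (Nat.mul_le_mul hcard₁ (hcard₄.trans (Nat.mul_le_mul hcard₂ hcard₃)))
      _ = 𝒲.card ^ M * 𝒜.card ^ (p + (k - (p + M))) := by ring
      _ ≤ 𝒲.card ^ M * 𝒜.card ^ k := Nat.mul_le_mul_left _ (Nat.pow_le_pow_right h𝒜 (by omega))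

lemma IsDynSmallCoverOf.exists_univ_of_forall_ge_iterate_mem {𝒲 : Finset (Set X)} {M : ℕ}
    (hG : IsDynSmallCoverOf T G U n 𝒜) (hGne : G.Nonempty) (huniv : IsDynSmallCoverOf T univ U n 𝒲)
    (hn : n ≠ 0) (hret : ∀ x ∉ G, ∀ j ≥ M, T^[j] x ∈ G) (k : ℕ) :
    ∃ 𝒞 : Finset (Set X), IsDynSmallCoverOf T univ U (n * k) 𝒞 ∧
      𝒞.card ≤ (k + 1) * (𝒲.card ^ M * 𝒜.card ^ k) := by
  obtain ⟨𝒞, h, hcard⟩ := exists_isDynSmallCoverOf_biUnion (Finset.range (k + 1))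
    (fun p => {x | ∀ i < k, (i < p ∨ p + M ≤ i) → T^[n * i] x ∈ G})
    fun p hp => hG.exists_visits_outside_window (hG.card_pos hGne) huniv M
      (Finset.mem_range_succ_iff.1 hp)
  refine ⟨𝒞, h.mono (fun x _ => ?_) le_rfl, by simpa using hcard⟩
  obtain ⟨p, hpk, hp⟩ := exists_le_forall_iterate_mul_mem hn hret k x
  exact mem_biUnion (Finset.mem_range_succ_iff.2 hpk) hp

lemma IsDynSmallCoverOf.coverEntropyEntourage_univ_le_log_card_div {𝒲 : Finset (Set X)} {M : ℕ}
    (hG : IsDynSmallCoverOf T G U n 𝒜) (hGne : G.Nonempty) (huniv : IsDynSmallCoverOf T univ U n 𝒲)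
    (hn : n ≠ 0) (hret : ∀ x ∉ G, ∀ j ≥ M, T^[j] x ∈ G) :
    coverEntropyEntourage T univ U ≤ log 𝒜.card / n := by
  have hbound (k : ℕ) : (coverMincard T univ U (n * k) : ℝ≥0∞) ≤
      (𝒲.card ^ M : ℝ≥0∞) * ((k + 1 : ℝ≥0∞) * (𝒜.card : ℝ≥0∞) ^ k) := by
    obtain ⟨𝒞, h, hcard⟩ := hG.exists_univ_of_forall_ge_iterate_mem hGne huniv hn hret k
    calc (coverMincard T univ U (n * k) : ℝ≥0∞) ≤ (𝒞.card : ℝ≥0∞) := by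
          exact_mod_cast h.coverMincard_le_card
      _ ≤ _ := by
          rw [mul_left_comm]
          exact_mod_cast hcard
  have hgrowth : expGrowthSup (fun k => (coverMincard T univ U (n * k) : ℝ≥0∞)) ≤ log 𝒜.card :=
    calc _ ≤ expGrowthSup ((fun k : ℕ => (k + 1 : ℝ≥0∞)) * fun k => (𝒜.card : ℝ≥0∞) ^ k) :=
          expGrowthSup_le_of_eventually_le (by simp) (Eventually.of_forall hbound)
      _ ≤ expGrowthSup (fun k : ℕ => (k + 1 : ℝ≥0∞)) + expGrowthSup fun k => (𝒜.card : ℝ≥0∞) ^ k :=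
          expGrowthSup_mul_le (by simp [expGrowthSup_natCast_add_one])
            (by simp [expGrowthSup_natCast_add_one])
      _ = log 𝒜.card := by rw [expGrowthSup_natCast_add_one, expGrowthSup_pow, zero_add]
  have hmono : Monotone fun k => (coverMincard T univ U k : ℝ≥0∞) :=
    fun _ _ hkl => ENat.toENNReal_mono (coverMincard_monotone_time T univ U hkl)
  rw [hmono.expGrowthSup_comp_mul hn] at hgrowth
  rw [coverEntropyEntourage, EReal.le_div_iff_mul_le (by exact_mod_cast Nat.pos_of_ne_zero hn)
    (natCast_ne_top n), mul_comm]
  exact hgrowth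

end SmallCover

lemma exists_forall_ge_iterate_mem_of_tendsto_iSup_infDist {X : Type*} [MetricSpace X]
    [CompactSpace X] {T : X → X} {Z : Set X} (hZ : IsClosed Z) (hZne : Z.Nonempty)
    (hattr : ∀ C : Set X, IsCompact C → C ⊆ Zᶜ →
      Tendsto (fun n : ℕ => ⨆ x ∈ C, infDist (T^[n] x) Z) atTop (nhds 0))
    {G : Set X} (hG : IsOpen G) (hZG : Z ⊆ G) :
    ∃ M, ∀ x ∉ G, ∀ j ≥ M, T^[j] x ∈ G := by
  obtain ⟨δ, hδ, hδG⟩ := hZ.isCompact.exists_thickening_subset_open hG hZG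
  obtain ⟨M, hM⟩ := eventually_atTop.1 <|
    (hattr Gᶜ hG.isClosed_compl.isCompact (compl_subset_compl.2 hZG)).eventually_lt_const hδ
  refine ⟨M, fun x hx j hj => hδG ((mem_thickening_iff_infDist_lt hZne).2 ?_)⟩
  obtain ⟨z, hz⟩ := hZne
  have hbdd : BddAbove (⋃ y, range fun _ : y ∈ Gᶜ => infDist (T^[j] y) Z) := by
    refine ⟨diam (univ : Set X), ?_⟩
    simp only [mem_upperBounds, mem_iUnion, mem_range]
    rintro _ ⟨y, -, rfl⟩
    exact (infDist_le_dist_of_mem hz).trans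
      (dist_le_diam_of_mem isCompact_univ.isBounded trivial trivial)
  exact (le_ciSup₂ (f := fun y (_ : y ∈ Gᶜ) => infDist (T^[j] y) Z) hbdd x hx).trans_lt (hM j hj)

lemma coverEntropyEntourage_univ_le_log_coverMincard_div {X : Type*} [MetricSpace X]
    [CompactSpace X] {T : X → X} (hT : Continuous T) {Z : Set X} (hZ : IsClosed Z)
    (hZne : Z.Nonempty) (hZinv : MapsTo T Z Z)
    (hattr : ∀ C : Set X, IsCompact C → C ⊆ Zᶜ →
      Tendsto (fun n : ℕ => ⨆ x ∈ C, infDist (T^[n] x) Z) atTop (nhds 0))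
    {V : SetRel X X} (hV : V ∈ uniformity X) (hVopen : IsOpen V) [V.IsSymm] {n : ℕ} (hn : n ≠ 0) :
    coverEntropyEntourage T univ (V ○ V) ≤ log (coverMincard T Z V n) / n := by
  obtain ⟨s, hs, hscard⟩ := (coverMincard_finite_iff T Z V n).1
    (coverMincard_finite_of_isCompact_invariant hZ.isCompact hZinv hV n)
  set G := ⋃ y ∈ s, UniformSpace.ball y (dynEntourage T V n)
  have hGopen : IsOpen G :=
    isOpen_biUnion fun y _ => UniformSpace.isOpen_ball y (isOpen.dynEntourage hT hVopen n)
  have hZG : Z ⊆ G := fun z hz => by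
    obtain ⟨y, hy, hzy⟩ := hs hz
    exact mem_biUnion hy ((dynEntourage T V n).symm hzy)
  have hsG : IsDynCoverOf T G V n s := fun x hx => by
    obtain ⟨y, hy, hxy⟩ := mem_iUnion₂.1 hx
    exact ⟨y, hy, (dynEntourage T V n).symm hxy⟩
  obtain ⟨𝒜, h𝒜, h𝒜card⟩ := hsG.exists_isDynSmallCoverOf
  obtain ⟨t, ht⟩ := exists_isDynCoverOf_of_isCompact_uniformContinuous isCompact_univ
    (CompactSpace.uniformContinuous_of_continuous hT) hV n
  obtain ⟨𝒲, h𝒲, -⟩ := ht.exists_isDynSmallCoverOf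
  obtain ⟨M, hM⟩ := exists_forall_ge_iterate_mem_of_tendsto_iSup_infDist hZ hZne hattr hGopen hZG
  calc coverEntropyEntourage T univ (V ○ V) ≤ log 𝒜.card / n :=
        h𝒜.coverEntropyEntourage_univ_le_log_card_div (hZne.mono hZG) h𝒲 hn hM
    _ ≤ log (coverMincard T Z V n) / n := by
        refine div_le_div_right_of_nonneg n.cast_nonneg' (log_monotone ?_)
        rw [← hscard]
        exact_mod_cast h𝒜card

end Dynamics

/-- Proposition 2.3 (Douady): if `Z` is a nonempty closed invariant subset of a compact
metric space `X` and the orbits of `f` approach `Z` uniformly on every compact subset of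
`X \ Z`, then the topological entropy of `f` on `X` equals its entropy on `Z`. -/
theorem coverEntropy_eq_coverEntropy_of_uniformly_attracting
    {X : Type*} [MetricSpace X] [CompactSpace X]
    (f : X → X) (hf : Continuous f)
    (Z : Set X) (hZclosed : IsClosed Z) (hZne : Z.Nonempty) (hZinv : Set.MapsTo f Z Z)
    (hattr : ∀ C : Set X, IsCompact C → C ⊆ Zᶜ →
      Filter.Tendsto (fun n : ℕ => ⨆ x ∈ C, Metric.infDist (f^[n] x) Z)
        Filter.atTop (nhds 0)) :
    coverEntropy f (Set.univ : Set X) = coverEntropy f Z := by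
  refine le_antisymm ?_ (coverEntropy_monotone f (subset_univ Z))
  rw [← coverEntropyInf_eq_coverEntropy f hZinv]
  refine iSup₂_le fun U hU => ?_
  obtain ⟨V, hV, hVopen, hVsymm, hVU⟩ := comp_open_symm_mem_uniformity_sets hU
  calc coverEntropyEntourage f univ U ≤ coverEntropyEntourage f univ (V ○ V) :=
        coverEntropyEntourage_antitone f univ hVU
    _ ≤ coverEntropyInfEntourage f Z V := le_liminf_of_le (by isBoundedDefault) <|
        eventually_atTop.2 ⟨1, fun n hn => coverEntropyEntourage_univ_le_log_coverMincard_div hf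
          hZclosed hZne hZinv hattr hV hVopen (Nat.one_le_iff_ne_zero.1 hn)⟩
    _ ≤ coverEntropyInf f Z := coverEntropyInfEntourage_le_coverEntropyInf f Z hV
end

section
/- Let X and Y be compact metric spaces, f : X → X and g : Y → Y continuous, and π : Y → X a continuous surjection satisfying π ∘ g = f ∘ π. Then h_top(f) ≤ h_top(g). If moreover there exists M ∈ ℕ such that every fiber π⁻¹({x}) (x ∈ X) has at most M elements, then h_top(f) = h_top(g). -/
/-!
The inequality `h_top(f) ≤ h_top(g)` is the monotonicity of entropy under uniformly continuous
factor maps. Conversely, since `π` is a closed map with fibres of at most `M` points, for every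
entourage `W` of `Y` there is an entourage `U` of `X` such that the preimage of every `U`-ball is
covered by at most `M` balls of radius `W`. Following orbits, a `(U, n)`-cover of `X` with `N`
points then yields a `(W ○ W, n)`-cover of `Y` with `N * M ^ n` points, so
`h_top(g) ≤ h_top(f) + log M`.
Applied to `f^[k]` and `g^[k]`, together with `h_top(T^[k]) = k * h_top(T)`, this gives
`k * h_top(g) ≤ k * h_top(f) + log M` for all `k ≥ 1`, hence `h_top(g) ≤ h_top(f)`.
-/

open Dynamics

lemma EReal.le_of_forall_natCast_mul_le_mul_add {a b c : EReal} (hc : c ≠ ⊤)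
    (h : ∀ k : ℕ, k ≠ 0 → k * a ≤ k * b + c) : a ≤ b := by
  by_contra! hba
  obtain ⟨p, hbp, hpa⟩ := EReal.exists_between_coe_real hba
  obtain ⟨q, hpq, hqa⟩ := EReal.exists_between_coe_real hpa
  obtain ⟨r, hcr, -⟩ := EReal.exists_between_coe_real (lt_top_iff_ne_top.2 hc)
  have hpq' : p < q := EReal.coe_lt_coe_iff.1 hpq
  obtain ⟨k, hk⟩ := exists_nat_gt (r / (q - p))
  rw [div_lt_iff₀ (_root_.sub_pos.2 hpq')] at hk
  have hbound : ((k + 1 : ℕ) : EReal) * q ≤ ((k + 1 : ℕ) : EReal) * p + r :=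
    calc ((k + 1 : ℕ) : EReal) * q ≤ (k + 1 : ℕ) * a :=
          mul_le_mul_of_nonneg_left hqa.le (Nat.cast_nonneg' _)
      _ ≤ (k + 1 : ℕ) * b + c := h (k + 1) k.succ_ne_zero
      _ ≤ (k + 1 : ℕ) * p + r :=
          add_le_add (mul_le_mul_of_nonneg_left hbp.le (Nat.cast_nonneg' _)) hcr.le
  have hbound' : ((k + 1 : ℕ) : ℝ) * q ≤ (k + 1 : ℕ) * p + r := by exact_mod_cast hbound
  push_cast at hbound'
  nlinarith

namespace Dynamics

open Set Function Filter UniformSpace ENNReal EReal ExpGrowth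
open scoped SetRel Uniformity Topology

section Iterate

variable {X : Type*} {T : X → X} {k : ℕ}

lemma dynEntourage_iterate_dynEntourage (T : X → X) (U : SetRel X X) (k n : ℕ) :
    dynEntourage (T^[k]) (dynEntourage T U k) n = dynEntourage T U (k * n) := by
  ext ⟨x, y⟩
  simp only [mem_dynEntourage, ← iterate_mul, ← iterate_add_apply]
  constructor
  · intro h l hl
    have hq : l / k < n := Nat.div_lt_of_lt_mul hl
    have hr : l % k < k := Nat.mod_lt l (Nat.pos_of_ne_zero (by rintro rfl; simp at hl))
    simpa only [mul_comm k, Nat.mod_add_div'] using h (l / k) hq (l % k) hr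
  · intro h i hi j hj
    exact h _ (by nlinarith)

lemma coverMincard_iterate_dynEntourage (T : X → X) (F : Set X) (U : SetRel X X) (k n : ℕ) :
    coverMincard (T^[k]) F (dynEntourage T U k) n = coverMincard T F U (k * n) := by
  simp only [coverMincard, IsDynCoverOf, dynEntourage_iterate_dynEntourage]

lemma coverMincard_iterate_le (T : X → X) (F : Set X) (U : SetRel X X) (hk : k ≠ 0) (n : ℕ) :
    coverMincard (T^[k]) F U n ≤ coverMincard T F U (k * n) := by
  rw [← coverMincard_iterate_dynEntourage]
  exact coverMincard_antitone _ F n fun p hp ↦ by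
    simpa using mem_dynEntourage.1 hp 0 (Nat.pos_of_ne_zero hk)

lemma monotone_coverMincard_toENNReal (T : X → X) (F : Set X) (U : SetRel X X) :
    Monotone fun n : ℕ ↦ (coverMincard T F U n : ℝ≥0∞) :=
  fun _ _ h ↦ ENat.toENNReal_mono (coverMincard_monotone_time T F U h)

lemma coverEntropyEntourage_iterate_le (T : X → X) (F : Set X) (U : SetRel X X) (hk : k ≠ 0) :
    coverEntropyEntourage (T^[k]) F U ≤ k * coverEntropyEntourage T F U :=
  (expGrowthSup_monotone fun n ↦ ENat.toENNReal_mono (coverMincard_iterate_le T F U hk n)).trans_eq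
    ((monotone_coverMincard_toENNReal T F U).expGrowthSup_comp_mul hk)

lemma coverEntropyEntourage_iterate_dynEntourage (T : X → X) (F : Set X) (U : SetRel X X)
    (hk : k ≠ 0) :
    coverEntropyEntourage (T^[k]) F (dynEntourage T U k) = k * coverEntropyEntourage T F U := by
  simp only [coverEntropyEntourage, coverMincard_iterate_dynEntourage]
  exact (monotone_coverMincard_toENNReal T F U).expGrowthSup_comp_mul hk

variable [UniformSpace X]

lemma coverEntropy_iterate_le (T : X → X) (F : Set X) (hk : k ≠ 0) :
    coverEntropy (T^[k]) F ≤ k * coverEntropy T F :=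
  iSup₂_le fun U hU ↦ (coverEntropyEntourage_iterate_le T F U hk).trans <|
    mul_le_mul_of_nonneg_left (coverEntropyEntourage_le_coverEntropy T F hU) (Nat.cast_nonneg' k)

lemma le_coverEntropy_iterate (hT : UniformContinuous T) (F : Set X) (hk : k ≠ 0) :
    k * coverEntropy T F ≤ coverEntropy (T^[k]) F := by
  have hk₀ : (0 : EReal) < k := by exact_mod_cast Nat.pos_of_ne_zero hk
  rw [mul_comm, ← le_div_iff_mul_le hk₀ (natCast_ne_top k)]
  refine iSup₂_le fun U hU ↦ ?_
  rw [le_div_iff_mul_le hk₀ (natCast_ne_top k), mul_comm,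
    ← coverEntropyEntourage_iterate_dynEntourage T F U hk]
  exact coverEntropyEntourage_le_coverEntropy _ F (dynEntourage_mem_uniformity hT hU k)

end Iterate

section Cover

variable {X Y : Type*}

lemma coverMincard_biUnion_le {ι : Type*} (T : X → X) (F : ι → Set X) (U : SetRel X X) (n : ℕ)
    (s : Finset ι) : coverMincard T (⋃ i ∈ s, F i) U n ≤ ∑ i ∈ s, coverMincard T (F i) U n := by
  classical
  induction s using Finset.induction_on with
  | empty => simp [coverMincard_empty]
  | insert i s hi ih =>
    rw [Finset.set_biUnion_insert, Finset.sum_insert hi]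
    exact (coverMincard_union_le T _ _ U n).trans (add_le_add_right ih _)

lemma coverMincard_iInter_preimage_ball_le_one (T : Y → Y) {W : SetRel Y Y} [W.IsSymm] {n : ℕ}
    (σ : Fin n → Y) : coverMincard T (⋂ i : Fin n, T^[i] ⁻¹' ball (σ i) W) (W ○ W) n ≤ 1 := by
  rcases eq_empty_or_nonempty (⋂ i : Fin n, T^[i] ⁻¹' ball (σ i) W) with h | ⟨a, ha⟩
  · simp [h, coverMincard_empty]
  have hcover : IsDynCoverOf T (⋂ i : Fin n, T^[i] ⁻¹' ball (σ i) W) (W ○ W) n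
      ({a} : Finset Y) := by
    intro b hb
    simp only [mem_iInter, mem_preimage] at ha hb
    refine ⟨a, Finset.mem_coe.2 (Finset.mem_singleton_self a), mem_dynEntourage.2 fun k hk ↦ ?_⟩
    exact SetRel.prodMk_mem_comp (W.symm (hb ⟨k, hk⟩)) (ha ⟨k, hk⟩)
  simpa using hcover.coverMincard_le_card

lemma coverMincard_iInter_preimage_biUnion_ball_le (T : Y → Y) {W : SetRel Y Y} [W.IsSymm]
    {n : ℕ} (t : Fin n → Finset Y) :
    coverMincard T (⋂ i : Fin n, T^[i] ⁻¹' ⋃ z ∈ t i, ball z W) (W ○ W) n ≤ ∏ i, (t i).card := by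
  classical
  have hsub : (⋂ i : Fin n, T^[i] ⁻¹' ⋃ z ∈ t i, ball z W) ⊆
      ⋃ σ ∈ Fintype.piFinset t, ⋂ i : Fin n, T^[i] ⁻¹' ball (σ i) W := by
    intro y hy
    simp only [mem_iInter, mem_preimage, mem_iUnion, exists_prop] at hy
    choose σ hσt hσ using hy
    exact mem_biUnion (Fintype.mem_piFinset.2 hσt) (mem_iInter.2 hσ)
  calc coverMincard T _ (W ○ W) n
      ≤ ∑ σ ∈ Fintype.piFinset t, coverMincard T (⋂ i : Fin n, T^[i] ⁻¹' ball (σ i) W) (W ○ W) n :=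
        (coverMincard_monotone_subset T _ n hsub).trans (coverMincard_biUnion_le T _ _ n _)
    _ ≤ ∑ σ ∈ Fintype.piFinset t, 1 :=
        Finset.sum_le_sum fun σ _ ↦ coverMincard_iInter_preimage_ball_le_one T σ
    _ = ∏ i, (t i).card := by simp [Fintype.card_piFinset]

lemma coverMincard_preimage_le_mul_pow {f : X → X} {g : Y → Y} {π : Y → X} (h : Semiconj π g f)
    {U : SetRel X X} [U.IsSymm] {W : SetRel Y Y} [W.IsSymm] {M : ℕ} (hM : M ≠ 0)
    (hUW : ∀ x, ∃ t : Finset Y, t.card ≤ M ∧ π ⁻¹' ball x U ⊆ ⋃ z ∈ t, ball z W)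
    (F : Set X) (n : ℕ) :
    coverMincard g (π ⁻¹' F) (W ○ W) n ≤ coverMincard f F U n * M ^ n := by
  rcases eq_top_or_lt_top (coverMincard f F U n) with htop | hfin
  · simp [htop, ENat.top_mul, hM]
  obtain ⟨s, hs, hcard⟩ := (coverMincard_finite_iff f F U n).1 hfin
  choose t ht htW using hUW
  have hsub : π ⁻¹' F ⊆ ⋃ x ∈ s, ⋂ i : Fin n, g^[i] ⁻¹' ⋃ z ∈ t (f^[i] x), ball z W := by
    intro y hy
    obtain ⟨x, hxs, hyx⟩ := hs hy
    refine mem_biUnion hxs (mem_iInter.2 fun i ↦ htW _ ?_)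
    rw [mem_preimage, (h.iterate_right i) y]
    exact U.symm (mem_dynEntourage.1 hyx i i.2)
  calc coverMincard g (π ⁻¹' F) (W ○ W) n
      ≤ ∑ x ∈ s, ((∏ i : Fin n, (t (f^[i] x)).card : ℕ) : ℕ∞) :=
        (coverMincard_monotone_subset g _ n hsub).trans <|
          (coverMincard_biUnion_le g _ _ n s).trans <|
            Finset.sum_le_sum fun x _ ↦ coverMincard_iInter_preimage_biUnion_ball_le g _
    _ ≤ ∑ _x ∈ s, ((M ^ n : ℕ) : ℕ∞) := by
        gcongr with x
        exact (Finset.prod_le_pow_card _ _ _ fun i _ ↦ ht _).trans_eq (by simp)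
    _ = coverMincard f F U n * M ^ n := by simp [← hcard]

end Cover

section Fibers

variable {X Y : Type*} [UniformSpace X] [UniformSpace Y] [CompactSpace Y]

lemma exists_isSymm_mem_uniformity_preimage_ball_subset [CompactSpace X] [T2Space X] {π : Y → X}
    (hπ : Continuous π) {M : ℕ} (hfib : ∀ x : X, (π ⁻¹' {x}).Finite ∧ (π ⁻¹' {x}).ncard ≤ M)
    {W : SetRel Y Y} (hW : W ∈ 𝓤 Y) :
    ∃ U : SetRel X X, U ∈ 𝓤 X ∧ U.IsSymm ∧
      ∀ x, ∃ t : Finset Y, t.card ≤ M ∧ π ⁻¹' ball x U ⊆ ⋃ z ∈ t, ball z W := by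
  have hnhds : ∀ x, ∃ N ∈ 𝓝 x, π ⁻¹' N ⊆ ⋃ z ∈ (hfib x).1.toFinset, ball z W := fun x ↦ by
    have : (⋃ z ∈ (hfib x).1.toFinset, ball z W) ∈ 𝓝ˢ (π ⁻¹' {x}) :=
      mem_nhdsSet_iff_forall.2 fun z hz ↦ Filter.mem_of_superset (ball_mem_nhds z hW)
        (subset_biUnion_of_mem (u := fun z ↦ ball z W) (by simpa using hz))
    rwa [← hπ.isClosedMap.comap_nhds_eq hπ x, Filter.mem_comap] at this
  choose N hN hNsub using hnhds
  obtain ⟨U, ⟨hU, -, hUsymm⟩, hUN⟩ :=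
    uniformity_hasBasis_open_symmetric.lebesgue_number_lemma_nhds isCompact_univ fun x _ ↦ hN x
  refine ⟨U, hU, hUsymm, fun x ↦ ?_⟩
  obtain ⟨x', hx'⟩ := hUN x (mem_univ x)
  refine ⟨(hfib x').1.toFinset, ?_, (preimage_mono hx').trans (hNsub x')⟩
  rw [← ncard_eq_toFinset_card _ (hfib x').1]
  exact (hfib x').2

theorem coverEntropy_le_coverEntropy_add_log [CompactSpace X] [T2Space X] {f : X → X}
    {g : Y → Y} {π : Y → X} (h : Semiconj π g f) (hπ : Continuous π) {M : ℕ}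
    (hfib : ∀ x : X, (π ⁻¹' {x}).Finite ∧ (π ⁻¹' {x}).ncard ≤ M) :
    coverEntropy g univ ≤ coverEntropy f univ + log (M : ℝ≥0∞) := by
  rcases isEmpty_or_nonempty Y with hY | ⟨⟨y⟩⟩
  · simp [univ_eq_empty_iff.2 hY, coverEntropy_empty]
  have hM : M ≠ 0 :=
    (((ncard_pos (hfib (π y)).1).2 ⟨y, rfl⟩).trans_le (hfib (π y)).2).ne'
  refine iSup₂_le fun V hV ↦ ?_
  obtain ⟨W, hW, hWsymm, hWV⟩ := comp_symm_mem_uniformity_sets hV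
  obtain ⟨U, hU, hUsymm, hUW⟩ := exists_isSymm_mem_uniformity_preimage_ball_subset hπ hfib hW
  have hmincard (n : ℕ) : (coverMincard g univ (W ○ W) n : ℝ≥0∞) ≤
      (coverMincard f univ U n : ℝ≥0∞) * (M : ℝ≥0∞) ^ n := by
    simpa using ENat.toENNReal_mono (coverMincard_preimage_le_mul_pow h hM hUW univ n)
  calc coverEntropyEntourage g univ V
      ≤ coverEntropyEntourage g univ (W ○ W) := coverEntropyEntourage_antitone g univ hWV
    _ ≤ expGrowthSup ((fun n ↦ (coverMincard f univ U n : ℝ≥0∞)) * fun n ↦ (M : ℝ≥0∞) ^ n) :=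
        expGrowthSup_monotone hmincard
    _ ≤ coverEntropyEntourage f univ U + log (M : ℝ≥0∞) := by
        refine (expGrowthSup_mul_le ?_ ?_).trans_eq (by rw [expGrowthSup_pow]; rfl)
          <;> simp [expGrowthSup_pow, hM]
    _ ≤ coverEntropy f univ + log (M : ℝ≥0∞) :=
        add_le_add_left (coverEntropyEntourage_le_coverEntropy f univ hU) _

end Fibers

end Dynamics

theorem coverEntropy_le_of_semiconj_and_eq_of_finite_fibers_general
    {X Y : Type*} [MetricSpace X] [CompactSpace X] [MetricSpace Y] [CompactSpace Y]
    (f : X → X) (g : Y → Y) (π : Y → X)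
    (hg : Continuous g) (hπ : Continuous π)
    (hsurj : Function.Surjective π) (hsemi : π ∘ g = f ∘ π) :
    coverEntropy f (Set.univ : Set X) ≤ coverEntropy g (Set.univ : Set Y) ∧
      (∀ M : ℕ, (∀ x : X, (π ⁻¹' {x}).Finite ∧ (π ⁻¹' {x}).ncard ≤ M) →
        coverEntropy f (Set.univ : Set X) = coverEntropy g (Set.univ : Set Y)) := by
  have hsc : Function.Semiconj π g f := Function.semiconj_iff_comp_eq.2 hsemi
  have hle : coverEntropy f Set.univ ≤ coverEntropy g Set.univ := by
    simpa [hsurj.range_eq] using coverEntropy_image_le_of_uniformContinuous hsc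
      (CompactSpace.uniformContinuous_of_continuous hπ) Set.univ
  refine ⟨hle, fun M hfib ↦ le_antisymm hle ?_⟩
  refine EReal.le_of_forall_natCast_mul_le_mul_add (c := ENNReal.log M) (by simp) fun k hk ↦ ?_
  calc k * coverEntropy g Set.univ
      ≤ coverEntropy (g^[k]) Set.univ :=
        le_coverEntropy_iterate (CompactSpace.uniformContinuous_of_continuous hg) Set.univ hk
    _ ≤ coverEntropy (f^[k]) Set.univ + ENNReal.log M :=
        coverEntropy_le_coverEntropy_add_log (hsc.iterate_right k) hπ hfib
    _ ≤ k * coverEntropy f Set.univ + ENNReal.log M :=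
        add_le_add_left (coverEntropy_iterate_le f Set.univ hk) _

/-- Proposition 2.4 (Douady): if `π : Y → X` is a continuous surjective semi-conjugacy
from `(Y, g)` to `(X, f)` between compact metric spaces, then `h_top(f) ≤ h_top(g)`;
if moreover the fibers of `π` have uniformly bounded (finite) cardinality, then
`h_top(f) = h_top(g)`. -/
theorem coverEntropy_le_of_semiconj_and_eq_of_finite_fibers
    {X Y : Type*} [MetricSpace X] [CompactSpace X] [MetricSpace Y] [CompactSpace Y]
    (f : X → X) (g : Y → Y) (π : Y → X)
    (hf : Continuous f) (hg : Continuous g) (hπ : Continuous π)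
    (hsurj : Function.Surjective π) (hsemi : π ∘ g = f ∘ π) :
    coverEntropy f (Set.univ : Set X) ≤ coverEntropy g (Set.univ : Set Y) ∧
      (∀ M : ℕ, (∀ x : X, (π ⁻¹' {x}).Finite ∧ (π ⁻¹' {x}).ncard ≤ M) →
        coverEntropy f (Set.univ : Set X) = coverEntropy g (Set.univ : Set Y)) :=
  coverEntropy_le_of_semiconj_and_eq_of_finite_fibers_general f g π hg hπ hsurj hsemi
end

section
/- Let X be a compact metric space, f : X → X continuous, k ≥ 1 an integer, K₁, …, K_k nonempty compact subsets of X, and σ : {1,…,k} → {1,…,k} a function such that f(K_i) ⊆ K_{σ(i)} for every i. Call an index i periodic if σ^[p](i) = i for some p ≥ 1, and let p_i denote the least such p. Then the topological entropy of f on K₁ ∪ … ∪ K_k equals the maximum, over all periodic indices i, of (1/p_i) times the topological entropy of f^[p_i] on K_i. -/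
/-!
For uniformly continuous `f`, a `(U, p * n)`-dynamical cover for `f` is the same thing as a
`(U_p, n)`-dynamical cover for `f^[p]`, where `U_p` is the dynamical entourage of `U` at time `p`;
hence `h(f^[p] | F) = p * h(f | F)`. For compact `F` one also has `h(f | F) ≤ h(f | f '' F)`, since
a cover of `F` at time `n + 1` is obtained from a cover of `F` at time `1` and a cover of `f '' F`
at time `n`. So `i ↦ h(f | K i)` increases along `σ`-orbits; it is therefore constant on cycles,
every orbit ends in a cycle, and the entropy of the union, the maximum of the `h(f | K i)`, is
attained at a periodic index `i`, where it equals `(1 / p_i) * h(f^[p_i] | K i)`.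
-/

open Dynamics Function Set SetRel
open scoped ENNReal

theorem Function.exists_iterate_mem_periodicPts {α : Type*} [Finite α] (f : α → α) (x : α) :
    ∃ m, f^[m] x ∈ periodicPts f := by
  obtain ⟨m, n, heq, hne⟩ : ∃ m n, f^[m] x = f^[n] x ∧ m ≠ n := by
    simpa [Injective] using not_injective_infinite_finite (f^[·] x)
  wlog hlt : m < n generalizing m n
  · exact this n m heq.symm hne.symm (by lia)
  refine ⟨m, mk_mem_periodicPts (Nat.sub_pos_of_lt hlt) ?_⟩
  rw [IsPeriodicPt, IsFixedPt, ← iterate_add_apply, Nat.sub_add_cancel hlt.le, heq]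

theorem Function.le_apply_iterate_of_forall_le {ι α : Type*} [Preorder α] {σ : ι → ι}
    {g : ι → α} (h : ∀ i, g i ≤ g (σ i)) (m : ℕ) (i : ι) : g i ≤ g (σ^[m] i) := by
  induction m with
  | zero => rfl
  | succ m ih => exact ih.trans (iterate_succ_apply' σ m i ▸ h _)

namespace SetRel

variable {X Y : Type*} {U : SetRel X X} {V : SetRel Y Y} {F : Set X}

theorem IsCover.exists_comp_inter_preimage [U.IsSymm] [V.IsSymm] (φ : X → Y) {t : Finset X}
    {s : Finset Y} (ht : IsCover U F t) (hs : IsCover V (φ '' F) s) :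
    ∃ u : Finset X,
      IsCover ((U ○ U) ∩ Prod.map φ φ ⁻¹' (V ○ V)) F u ∧ u.card ≤ t.card * s.card := by
  classical
  let P (z : X) (y : Y) (w : X) : Prop := w ∈ F ∧ (w, z) ∈ U ∧ (φ w, y) ∈ V
  let pick (zy : X × Y) : X := if h : ∃ w, P zy.1 zy.2 w then h.choose else zy.1
  refine ⟨(t ×ˢ s).image pick, fun x hx ↦ ?_,
    Finset.card_image_le.trans (Finset.card_product t s).le⟩
  obtain ⟨z, hzt, hxz⟩ := ht hx
  obtain ⟨y, hys, hxy⟩ := hs (mem_image_of_mem φ hx)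
  have hex : ∃ w, P z y w := ⟨x, hx, hxz, hxy⟩
  have hpick : P z y (pick (z, y)) := by simp only [pick, dif_pos hex]; exact hex.choose_spec
  refine ⟨pick (z, y), Finset.mem_image_of_mem _ (Finset.mem_product.2 ⟨hzt, hys⟩), ?_, ?_⟩
  · exact prodMk_mem_comp hxz (U.symm hpick.2.1)
  · exact prodMk_mem_comp hxy (V.symm hpick.2.2)

end SetRel

namespace Dynamics

variable {X : Type*} {T : X → X} {F : Set X} {U : SetRel X X}

theorem dynEntourage_succ (T : X → X) (U : SetRel X X) (n : ℕ) :
    dynEntourage T U (n + 1) = U ∩ Prod.map T T ⁻¹' dynEntourage T U n := by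
  ext ⟨x, y⟩
  simp only [mem_inter_iff, Set.mem_preimage, Prod.map_apply, mem_dynEntourage,
    Nat.forall_lt_succ_left, iterate_zero_apply, iterate_succ_apply]

theorem dynEntourage_iterate (T : X → X) (U : SetRel X X) (p n : ℕ) :
    dynEntourage T^[p] (dynEntourage T U p) n = dynEntourage T U (p * n) := by
  rcases p.eq_zero_or_pos with rfl | hp
  · simp
  ext ⟨x, y⟩
  simp only [mem_dynEntourage, ← iterate_mul, ← iterate_add_apply]
  constructor
  · intro h m hm
    have := h (m / p) (Nat.div_lt_of_lt_mul hm) (m % p) (Nat.mod_lt m hp)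
    rwa [Nat.mod_add_div] at this
  · intro h k hk j hj
    exact h _ (by nlinarith)

theorem coverMincard_iterate (T : X → X) (F : Set X) (U : SetRel X X) (p n : ℕ) :
    coverMincard T^[p] F (dynEntourage T U p) n = coverMincard T F U (p * n) := by
  simp only [coverMincard, IsDynCoverOf, dynEntourage_iterate]

theorem coverEntropyEntourage_iterate (T : X → X) (F : Set X) (U : SetRel X X) {p : ℕ}
    (hp : p ≠ 0) :
    coverEntropyEntourage T^[p] F (dynEntourage T U p) = p * coverEntropyEntourage T F U := by
  simp only [coverEntropyEntourage, coverMincard_iterate]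
  exact (ENat.toENNReal_mono.comp (coverMincard_monotone_time T F U)).expGrowthSup_comp_mul hp

theorem coverEntropy_iterate [UniformSpace X] (hT : UniformContinuous T) {p : ℕ} (hp : p ≠ 0)
    (F : Set X) : coverEntropy T^[p] F = p * coverEntropy T F := by
  have hp₀ : (0 : EReal) < p := by exact_mod_cast Nat.pos_of_ne_zero hp
  refine le_antisymm (iSup₂_le fun U hU ↦ ?_) ?_
  · have hUp : dynEntourage T U p ⊆ U := by
      simpa using dynEntourage_mono (T := T) subset_rfl (Nat.one_le_iff_ne_zero.2 hp)
    calc coverEntropyEntourage T^[p] F U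
        ≤ coverEntropyEntourage T^[p] F (dynEntourage T U p) :=
          coverEntropyEntourage_antitone _ _ hUp
      _ = p * coverEntropyEntourage T F U := coverEntropyEntourage_iterate T F U hp
      _ ≤ p * coverEntropy T F :=
          mul_le_mul_of_nonneg_left (coverEntropyEntourage_le_coverEntropy T F hU) hp₀.le
  · rw [mul_comm, ← EReal.le_div_iff_mul_le hp₀ (EReal.natCast_ne_top p)]
    refine iSup₂_le fun U hU ↦ ?_
    rw [EReal.le_div_iff_mul_le hp₀ (EReal.natCast_ne_top p), mul_comm,
      ← coverEntropyEntourage_iterate T F U hp]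
    exact coverEntropyEntourage_le_coverEntropy _ F (dynEntourage_mem_uniformity hT hU p)

theorem coverMincard_comp_succ_le [U.IsSymm] {t : Finset X} (ht : IsCover U F t) (n : ℕ) :
    coverMincard T F (U ○ U) (n + 1) ≤ t.card * coverMincard T (T '' F) U n := by
  rcases F.eq_empty_or_nonempty with rfl | hF
  · simp
  rcases eq_top_or_lt_top (coverMincard T (T '' F) U n) with htop | hfin
  · rw [htop, ENat.mul_top (by simpa [Finset.nonempty_iff_ne_empty] using ht.nonempty hF)]
    exact le_top
  obtain ⟨s, hs, hcard⟩ := (coverMincard_finite_iff T _ U n).1 hfin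
  obtain ⟨u, hu, hucard⟩ := ht.exists_comp_inter_preimage T hs
  have hsub : (U ○ U) ∩ Prod.map T T ⁻¹' (dynEntourage T U n ○ dynEntourage T U n) ⊆
      dynEntourage T (U ○ U) (n + 1) := by
    rw [dynEntourage_succ]
    exact inter_subset_inter_right _ (preimage_mono (dynEntourage_comp_subset T U U n))
  calc coverMincard T F (U ○ U) (n + 1) ≤ u.card :=
        IsDynCoverOf.coverMincard_le_card (hu.mono_entourage hsub)
    _ ≤ t.card * coverMincard T (T '' F) U n := by rw [← hcard]; exact_mod_cast hucard

theorem coverEntropy_le_coverEntropy_image [UniformSpace X] (hT : UniformContinuous T)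
    (hF : IsCompact F) : coverEntropy T F ≤ coverEntropy T (T '' F) := by
  refine iSup₂_le fun W hW ↦ ?_
  obtain ⟨U, hU, _, hUW⟩ := comp_symm_mem_uniformity_sets hW
  obtain ⟨t, ht⟩ := exists_isDynCoverOf_of_isCompact_uniformContinuous hF hT hU 1
  rw [IsDynCoverOf, dynEntourage_one] at ht
  have hbound (n : ℕ) :
      (coverMincard T F (U ○ U) n : ℝ≥0∞) ≤ t.card * coverMincard T (T '' F) U n := by
    exact_mod_cast (coverMincard_monotone_time T F _ n.le_succ).trans
      (coverMincard_comp_succ_le ht n)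
  calc coverEntropyEntourage T F W ≤ coverEntropyEntourage T F (U ○ U) :=
        coverEntropyEntourage_antitone T F hUW
    _ ≤ coverEntropyEntourage T (T '' F) U :=
        ExpGrowth.expGrowthSup_le_of_eventually_le (ENNReal.natCast_ne_top _) (.of_forall hbound)
    _ ≤ coverEntropy T (T '' F) := coverEntropyEntourage_le_coverEntropy T _ hU

end Dynamics

theorem coverEntropy_iUnion_eq_iSup_periodic_general
    {X : Type*} [MetricSpace X] [CompactSpace X]
    (f : X → X) (hf : Continuous f)
    (k : ℕ) (K : Fin k → Set X)
    (hKcomp : ∀ i, IsCompact (K i))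
    (σ : Fin k → Fin k) (hKmap : ∀ i, f '' K i ⊆ K (σ i)) :
    coverEntropy f (⋃ i, K i)
      = ⨆ i ∈ Function.periodicPts σ,
          (1 / ((Function.minimalPeriod σ i : ℕ) : EReal))
            * coverEntropy (f^[Function.minimalPeriod σ i]) (K i) := by
  have hfu : UniformContinuous f := CompactSpace.uniformContinuous_of_continuous hf
  have hstep (i : Fin k) : coverEntropy f (K i) ≤ coverEntropy f (K (σ i)) :=
    (coverEntropy_le_coverEntropy_image hfu (hKcomp i)).trans (coverEntropy_monotone f (hKmap i))
  have hperiodic (j) (hj : j ∈ periodicPts σ) :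
      1 / ((minimalPeriod σ j : ℕ) : EReal) * coverEntropy f^[minimalPeriod σ j] (K j)
        = coverEntropy f (K j) := by
    have hp := (minimalPeriod_pos_of_mem_periodicPts hj).ne'
    rw [coverEntropy_iterate hfu hp, ← mul_assoc, EReal.div_mul_cancel (EReal.natCast_ne_bot _)
      (EReal.natCast_ne_top _) (by exact_mod_cast hp), one_mul]
  rw [coverEntropy_iUnion_of_finite]
  refine le_antisymm (iSup_le fun i ↦ ?_) (iSup₂_le fun j hj ↦ (hperiodic j hj).le.trans ?_)
  · obtain ⟨m, hm⟩ := exists_iterate_mem_periodicPts σ i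
    calc coverEntropy f (K i) ≤ coverEntropy f (K (σ^[m] i)) :=
          le_apply_iterate_of_forall_le hstep m i
      _ = _ := (hperiodic _ hm).symm
      _ ≤ _ := le_iSup₂_of_le (σ^[m] i) hm le_rfl
  · exact le_iSup (fun i ↦ coverEntropy f (K i)) j

/-- Abstract core-entropy formula: if `f` maps each nonempty compact set `K i` into
`K (σ i)`, then the entropy of `f` on the union of the `K i` is the maximum, over the
`σ`-periodic indices `i` (with least period `p_i = minimalPeriod σ i`), of
`(1/p_i) · h_top(f^[p_i] | K i)`. -/
theorem coverEntropy_iUnion_eq_iSup_periodic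
    {X : Type*} [MetricSpace X] [CompactSpace X]
    (f : X → X) (hf : Continuous f)
    (k : ℕ) (hk : 1 ≤ k) (K : Fin k → Set X)
    (hKne : ∀ i, (K i).Nonempty) (hKcomp : ∀ i, IsCompact (K i))
    (σ : Fin k → Fin k) (hKmap : ∀ i, f '' K i ⊆ K (σ i)) :
    coverEntropy f (⋃ i, K i)
      = ⨆ i ∈ Function.periodicPts σ,
          (1 / ((Function.minimalPeriod σ i : ℕ) : EReal))
            * coverEntropy (f^[Function.minimalPeriod σ i]) (K i) :=
  coverEntropy_iUnion_eq_iSup_periodic_general f hf k K hKcomp σ hKmap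
end
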